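/- arXiv:2208.00051 — 4 statements merged into one kernel-verified Lean document; each statement's English description precedes it below -/
import Mathlib

section
/- Let R be a Noetherian commutative ring and 𝔭 a prime ideal. If for some fixed h ≥ 1 and all m ≥ 1 one has 𝔭^{(2hm+1)} ⊆ 𝔭 · 𝔭^{(2h(m-1)+1)}, then by induction 𝔭^{(2hn+1)} ⊆ 𝔭^{n+1} for all n ≥ 1, and consequently 𝔭^{(2hn)} ⊆ 𝔭^n for all n ≥ 1. -/
/-- The `n`-th symbolic power of a prime ideal `𝔭`: the contraction of
`𝔭^n R_𝔭` to `R` along the localization map. -/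
noncomputable def primeSymbolicPower {R : Type*} [CommRing R] (𝔭 : Ideal R) [𝔭.IsPrime]
    (n : ℕ) : Ideal R :=
  (Ideal.map (algebraMap R (Localization.AtPrime 𝔭)) (𝔭 ^ n)).comap
    (algebraMap R (Localization.AtPrime 𝔭))

theorem Ideal.le_pow_succ_of_le_mul {R : Type*} [CommSemiring R] {I : Ideal R}
    {a : ℕ → Ideal R} (h₀ : a 0 ≤ I) (hstep : ∀ m, a (m + 1) ≤ I * a m) (n : ℕ) :
    a n ≤ I ^ (n + 1) := by
  induction n with
  | zero => simpa using h₀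
  | succ n ih => exact (hstep n).trans ((Ideal.mul_mono_right ih).trans_eq (pow_succ' I _).symm)

section primeSymbolicPower

variable {R : Type*} [CommRing R] (𝔭 : Ideal R) [𝔭.IsPrime]

theorem primeSymbolicPower_antitone : Antitone (primeSymbolicPower 𝔭) := fun _ _ hNM =>
  Ideal.comap_mono (Ideal.map_mono (Ideal.pow_le_pow_right hNM))

theorem primeSymbolicPower_one : primeSymbolicPower 𝔭 1 = 𝔭 := by
  rw [primeSymbolicPower, pow_one]
  exact IsLocalization.under_map_of_isPrime_disjoint 𝔭.primeCompl _ inferInstance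
    (Set.disjoint_left.mpr fun _ hx => hx)

end primeSymbolicPower

theorem stmt_5_general {R : Type*} [CommRing R] (𝔭 : Ideal R) [𝔭.IsPrime]
    (h : ℕ) (hh : 1 ≤ h)
    (hyp : ∀ m : ℕ, 1 ≤ m →
      primeSymbolicPower 𝔭 (2 * h * m + 1) ≤ 𝔭 * primeSymbolicPower 𝔭 (2 * h * (m - 1) + 1)) :
    (∀ n : ℕ, 1 ≤ n → primeSymbolicPower 𝔭 (2 * h * n + 1) ≤ 𝔭 ^ (n + 1)) ∧
      (∀ n : ℕ, 1 ≤ n → primeSymbolicPower 𝔭 (2 * h * n) ≤ 𝔭 ^ n) := by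
  have odd_le : ∀ n : ℕ, primeSymbolicPower 𝔭 (2 * h * n + 1) ≤ 𝔭 ^ (n + 1) :=
    Ideal.le_pow_succ_of_le_mul (by simp [primeSymbolicPower_one])
      fun m => by simpa using hyp (m + 1) m.succ_pos
  refine ⟨fun n _ => odd_le n, fun n hn => ?_⟩
  obtain ⟨k, rfl⟩ := Nat.exists_eq_add_of_le' hn
  calc primeSymbolicPower 𝔭 (2 * h * (k + 1))
      ≤ primeSymbolicPower 𝔭 (2 * h * k + 1) :=
        primeSymbolicPower_antitone 𝔭 (by rw [mul_add, mul_one]; omega)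
    _ ≤ 𝔭 ^ (k + 1) := odd_le k

theorem stmt_5 {R : Type*} [CommRing R] [IsNoetherianRing R] (𝔭 : Ideal R) [𝔭.IsPrime]
    (h : ℕ) (hh : 1 ≤ h)
    (hyp : ∀ m : ℕ, 1 ≤ m →
      primeSymbolicPower 𝔭 (2 * h * m + 1) ≤ 𝔭 * primeSymbolicPower 𝔭 (2 * h * (m - 1) + 1)) :
    (∀ n : ℕ, 1 ≤ n → primeSymbolicPower 𝔭 (2 * h * n + 1) ≤ 𝔭 ^ (n + 1)) ∧
      (∀ n : ℕ, 1 ≤ n → primeSymbolicPower 𝔭 (2 * h * n) ≤ 𝔭 ^ n) :=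
  stmt_5_general 𝔭 h hh hyp
end

section
/- Let R be a ring of characteristic p and I an ideal. Suppose R is F-split (admits α : F^e_* R → R with α(F^e_* 1) = 1), and suppose there is an R/I-linear F-splitting ψ : F^e_*(R/I) → R/I that lifts to an R-linear map ψ̂ : F^e_* R → R compatible with the quotient maps. Then there exists an R-linear F-splitting of R that is compatible with I, i.e., φ : F^e_* R → R with φ(F^e_* 1) = 1 and φ(F^e_* I) ⊆ I. -/
theorem stmt_13 (p : ℕ) (hp : p.Prime) (R : Type*) [CommRing R] [CharP R p]
    (I : Ideal R) (e : ℕ)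
    (α : R →+ R) (hαlin : ∀ r x : R, α (r ^ p ^ e * x) = r * α x) (hα1 : α 1 = 1)
    (ψ : R ⧸ I →+ R ⧸ I)
    (hψlin : ∀ r x : R, ψ (Ideal.Quotient.mk I (r ^ p ^ e * x)) =
      Ideal.Quotient.mk I r * ψ (Ideal.Quotient.mk I x))
    (hψ1 : ψ 1 = 1)
    (ψhat : R →+ R) (hψhatlin : ∀ r x : R, ψhat (r ^ p ^ e * x) = r * ψhat x)
    (hlift : ∀ x : R, Ideal.Quotient.mk I (ψhat x) = ψ (Ideal.Quotient.mk I x)) :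
    ∃ φ : R →+ R, (∀ r x : R, φ (r ^ p ^ e * x) = r * φ x) ∧ φ 1 = 1 ∧
      ∀ x ∈ I, φ x ∈ I := by
  set i : R := ψhat 1 - 1 with hi
  have hiI : i ∈ I := by
    have : Ideal.Quotient.mk I (ψhat 1) = 1 := by rw [hlift]; simp [hψ1]
    have : Ideal.Quotient.mk I i = 0 := by
      simp [hi, map_sub, this]
    rwa [Ideal.Quotient.eq_zero_iff_mem] at this
  refine ⟨ψhat - (AddMonoidHom.mulLeft i).comp α, ?_, ?_, ?_⟩
  · intro r x
    simp only [AddMonoidHom.sub_apply, AddMonoidHom.comp_apply,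
      AddMonoidHom.coe_mulLeft, hψhatlin, hαlin]
    ring
  · simp [hα1, hi]
  · intro x hx
    have h1 : ψhat x ∈ I := by
      rw [← Ideal.Quotient.eq_zero_iff_mem, hlift,
        Ideal.Quotient.eq_zero_iff_mem.mpr hx, map_zero]
    have h2 : i * α x ∈ I := I.mul_mem_right _ hiI
    simpa using I.sub_mem h1 h2
end

section
/- Let A be a ring of characteristic p with surjective Frobenius (A = A^p), and let R, and hence M, N be R-modules over an A-algebra R. Then the natural surjection Θ : F^e_* M ⊗_A F^e_* N → F^e_*(M ⊗_A N), F^e_* m ⊗ F^e_* n ↦ F^e_*(m ⊗ n), is an isomorphism of R ⊗_A R-modules. -/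
open TensorProduct

/-- `FStar p e M` is the abelian group `M` viewed as a module via restriction of
scalars along the `e`-th iterate of the Frobenius `x ↦ x^{p^e}`, i.e. `F^e_* M`. -/
def FStar (_p _e : ℕ) (M : Type*) : Type _ := M

/-- The identification of `M` with `F^e_* M` as sets. -/
def FStar.of (p e : ℕ) {M : Type*} (m : M) : FStar p e M := m

instance (p e : ℕ) {M : Type*} [AddCommGroup M] : AddCommGroup (FStar p e M) :=
  inferInstanceAs (AddCommGroup M)

/-- The twisted module structure: `a • (F^e_* m) = F^e_* (a^{p^e} • m)`. -/
noncomputable instance (p e : ℕ) {A M : Type*} [CommRing A] [Fact p.Prime] [CharP A p]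
    [AddCommGroup M] [Module A M] : Module A (FStar p e M) :=
  letI : ExpChar A p := ExpChar.prime Fact.out
  Module.compHom M (iterateFrobenius A p e)

def FStar.un (p e : ℕ) {M : Type*} (m : FStar p e M) : M := m

namespace FStar

variable {p e : ℕ} [Fact p.Prime] {A M N : Type*} [CommRing A] [CharP A p]
  [AddCommGroup M] [Module A M] [AddCommGroup N] [Module A N]

theorem smul_of (a : A) (m : M) : a • of p e m = of p e (a ^ p ^ e • m) := rfl

variable (p e A M N)

noncomputable def tmulBilin :
    FStar p e M →ₗ[A] FStar p e N →ₗ[A] FStar p e (M ⊗[A] N) :=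
  LinearMap.mk₂ A (fun m n => of p e (un p e m ⊗ₜ[A] un p e n))
    (fun _ _ _ => add_tmul _ _ _)
    (fun a _ _ => smul_tmul' (a ^ p ^ e) _ _)
    (fun _ _ _ => tmul_add _ _ _)
    (fun a _ _ => tmul_smul (a ^ p ^ e) _ _)

noncomputable def tensorHom : FStar p e M ⊗[A] FStar p e N →ₗ[A] FStar p e (M ⊗[A] N) :=
  lift (tmulBilin p e A M N)

variable {p e A M N}

theorem tensorHom_tmul (m : M) (n : N) :
    tensorHom p e A M N (of p e m ⊗ₜ[A] of p e n) = of p e (m ⊗ₜ[A] n) := rfl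

/-- Well defined because every `a` is a `p^e`-th power
`b^{p^e}`, so `F^e_*(a m) ⊗ F^e_* n = b • F^e_* m ⊗ F^e_* n = F^e_* m ⊗ F^e_*(a n)`. -/
noncomputable def tensorInv (hA : Function.Surjective (fun a : A => a ^ p ^ e)) :
    FStar p e (M ⊗[A] N) →+ FStar p e M ⊗[A] FStar p e N :=
  liftAddHom
    (AddMonoidHom.mk' (fun m => AddMonoidHom.mk' (fun n => of p e m ⊗ₜ[A] of p e n)
      (fun _ _ => tmul_add _ _ _)) (fun _ _ => AddMonoidHom.ext fun _ => add_tmul _ _ _))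
    (fun a m n => by
      obtain ⟨b, rfl⟩ := hA a
      show of p e (b ^ p ^ e • m) ⊗ₜ[A] of p e n = of p e m ⊗ₜ[A] of p e (b ^ p ^ e • n)
      rw [← smul_of, ← smul_of, smul_tmul])

theorem tensorInv_tensorHom (hA : Function.Surjective (fun a : A => a ^ p ^ e))
    (x : FStar p e M ⊗[A] FStar p e N) : tensorInv hA (tensorHom p e A M N x) = x := by
  induction x with
  | zero => simp only [map_zero]
  | tmul m n => rfl
  | add x y hx hy => simp only [map_add, hx, hy]

theorem tensorHom_tensorInv (hA : Function.Surjective (fun a : A => a ^ p ^ e))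
    (x : FStar p e (M ⊗[A] N)) : tensorHom p e A M N (tensorInv hA x) = x := by
  induction x using TensorProduct.induction_on with
  | zero => exact ((tensorHom p e A M N).toAddMonoidHom.comp (tensorInv hA)).map_zero
  | tmul m n => rfl
  | add x y hx hy =>
    exact (((tensorHom p e A M N).toAddMonoidHom.comp (tensorInv hA)).map_add x y).trans
      (congrArg₂ (· + ·) hx hy)

theorem bijective_tensorHom (hA : Function.Surjective (fun a : A => a ^ p ^ e)) :
    Function.Bijective (tensorHom p e A M N) :=
  Function.bijective_iff_has_inverse.mpr
    ⟨tensorInv hA, tensorInv_tensorHom hA, tensorHom_tensorInv hA⟩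

end FStar

theorem stmt_14_general (p e : ℕ) [Fact p.Prime]
    (A M N : Type*) [CommRing A] [CharP A p]
    [AddCommGroup M] [Module A M] [AddCommGroup N] [Module A N]
    (hA : Function.Surjective (fun a : A => a ^ p)) :
    ∃ Θ : FStar p e M ⊗[A] FStar p e N →ₗ[A] FStar p e (M ⊗[A] N),
      (∀ (m : M) (n : N),
        Θ (FStar.of p e m ⊗ₜ[A] FStar.of p e n) = FStar.of p e (m ⊗ₜ[A] n)) ∧
      Function.Bijective Θ := by
  have hA' : Function.Surjective (fun a : A => a ^ p ^ e) := by
    simpa only [pow_iterate] using hA.iterate e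
  exact ⟨FStar.tensorHom p e A M N, FStar.tensorHom_tmul, FStar.bijective_tensorHom hA'⟩

theorem stmt_14 (p e : ℕ) [Fact p.Prime]
    (A R M N : Type*) [CommRing A] [CharP A p] [CommRing R] [Algebra A R]
    [AddCommGroup M] [Module A M] [AddCommGroup N] [Module A N]
    [Module R M] [Module R N] [IsScalarTower A R M] [IsScalarTower A R N]
    (hA : Function.Surjective (fun a : A => a ^ p)) :
    ∃ Θ : FStar p e M ⊗[A] FStar p e N →ₗ[A] FStar p e (M ⊗[A] N),
      (∀ (m : M) (n : N),
        Θ (FStar.of p e m ⊗ₜ[A] FStar.of p e n) = FStar.of p e (m ⊗ₜ[A] n)) ∧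
      Function.Bijective Θ :=
  stmt_14_general p e A M N hA
end

section
/- Let R be a Noetherian commutative ring, 𝔭 a prime ideal, and suppose that for all integers N > 2h and all rational s ∈ (h/N, 1 - h/N) one has 𝔭^{(N)} ⊆ 𝔭^{(⌈Ns⌉ - h)} · 𝔭^{(⌈N(1-s)⌉ - h)}, where h ≥ 1 is fixed. Then 𝔭^{(2hn)} ⊆ 𝔭^n for all n ≥ 1. -/
theorem exists_rat_ceil_sub_toNat_eq_one {h N : ℕ} (hN : 2 * h < N) :
    ∃ s : ℚ, (h : ℚ) / N < s ∧ s < 1 - (h : ℚ) / N ∧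
      (⌈(N : ℚ) * s⌉ - h).toNat = 1 ∧ (⌈(N : ℚ) * (1 - s)⌉ - h).toNat = N - 2 * h := by
  have hN' : (2 * h + 1 : ℚ) ≤ N := by exact_mod_cast hN
  have hNpos : (0 : ℚ) < N := by linarith [(Nat.cast_nonneg h : (0 : ℚ) ≤ h)]
  refine ⟨(h + 1 / 2) / N, ?_, ?_, ?_, ?_⟩
  · gcongr
    linarith
  · rw [div_lt_iff₀ hNpos, sub_mul, one_mul, div_mul_cancel₀ _ hNpos.ne']
    linarith
  · have hceil : ⌈(N : ℚ) * ((h + 1 / 2) / N)⌉ = h + 1 := by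
      rw [mul_div_cancel₀ _ hNpos.ne', Int.ceil_eq_iff]
      constructor <;> push_cast <;> linarith
    omega
  · have hceil : ⌈(N : ℚ) * (1 - (h + 1 / 2) / N)⌉ = N - h := by
      rw [mul_sub, mul_div_cancel₀ _ hNpos.ne', Int.ceil_eq_iff]
      constructor <;> push_cast <;> linarith
    omega

section SymbolicPower

variable {R : Type*} [CommRing R] (𝔭 : Ideal R) [𝔭.IsPrime]

def SplitsSymbolicPowers (h : ℕ) : Prop :=
  ∀ N : ℕ, 2 * h < N → ∀ s : ℚ, (h : ℚ) / N < s → s < 1 - (h : ℚ) / N →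
    primeSymbolicPower 𝔭 N ≤
      primeSymbolicPower 𝔭 ((⌈(N : ℚ) * s⌉ - h).toNat) *
        primeSymbolicPower 𝔭 ((⌈(N : ℚ) * (1 - s)⌉ - h).toNat)

variable {𝔭} {h : ℕ}

theorem SplitsSymbolicPowers.le_mul_sub (hsplit : SplitsSymbolicPowers 𝔭 h) {N : ℕ}
    (hN : 2 * h < N) : primeSymbolicPower 𝔭 N ≤ 𝔭 * primeSymbolicPower 𝔭 (N - 2 * h) := by
  obtain ⟨s, hs₁, hs₂, hceil₁, hceil₂⟩ := exists_rat_ceil_sub_toNat_eq_one hN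
  simpa only [hceil₁, hceil₂, primeSymbolicPower_one] using hsplit N hN s hs₁ hs₂

theorem SplitsSymbolicPowers.le_pow_succ (hsplit : SplitsSymbolicPowers 𝔭 h) (n : ℕ) :
    primeSymbolicPower 𝔭 (2 * h * n + 1) ≤ 𝔭 ^ (n + 1) := by
  induction n with
  | zero => simp [primeSymbolicPower_one]
  | succ n ih =>
    have hsub : 2 * h * (n + 1) + 1 - 2 * h = 2 * h * n + 1 := by rw [Nat.mul_succ]; omega
    calc primeSymbolicPower 𝔭 (2 * h * (n + 1) + 1)
        ≤ 𝔭 * primeSymbolicPower 𝔭 (2 * h * n + 1) :=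
          hsub ▸ hsplit.le_mul_sub (by nlinarith)
      _ ≤ 𝔭 * 𝔭 ^ (n + 1) := Ideal.mul_mono_right ih
      _ = 𝔭 ^ (n + 1 + 1) := (pow_succ' 𝔭 (n + 1)).symm

end SymbolicPower

theorem stmt_19_general {R : Type*} [CommRing R] (𝔭 : Ideal R) [𝔭.IsPrime]
    (h : ℕ) (hh : 1 ≤ h)
    (hyp : ∀ N : ℕ, 2 * h < N → ∀ s : ℚ, (h : ℚ) / N < s → s < 1 - (h : ℚ) / N →
      primeSymbolicPower 𝔭 N ≤
        primeSymbolicPower 𝔭 ((⌈(N : ℚ) * s⌉ - h).toNat) *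
          primeSymbolicPower 𝔭 ((⌈(N : ℚ) * (1 - s)⌉ - h).toNat)) :
    ∀ n : ℕ, 1 ≤ n → primeSymbolicPower 𝔭 (2 * h * n) ≤ 𝔭 ^ n := by
  rintro (_ | m) hn
  · omega
  calc primeSymbolicPower 𝔭 (2 * h * (m + 1))
      ≤ primeSymbolicPower 𝔭 (2 * h * m + 1) :=
        primeSymbolicPower_antitone 𝔭 (by rw [Nat.mul_succ]; omega)
    _ ≤ 𝔭 ^ (m + 1) := SplitsSymbolicPowers.le_pow_succ hyp m

theorem stmt_19 {R : Type*} [CommRing R] [IsNoetherianRing R] (𝔭 : Ideal R) [𝔭.IsPrime]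
    (h : ℕ) (hh : 1 ≤ h)
    (hyp : ∀ N : ℕ, 2 * h < N → ∀ s : ℚ, (h : ℚ) / N < s → s < 1 - (h : ℚ) / N →
      primeSymbolicPower 𝔭 N ≤
        primeSymbolicPower 𝔭 ((⌈(N : ℚ) * s⌉ - h).toNat) *
          primeSymbolicPower 𝔭 ((⌈(N : ℚ) * (1 - s)⌉ - h).toNat)) :
    ∀ n : ℕ, 1 ≤ n → primeSymbolicPower 𝔭 (2 * h * n) ≤ 𝔭 ^ n :=
  stmt_19_general 𝔭 h hh hyp
end
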